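/- Fix d ≥ 1 and β ∈ (0,∞], and let Q be a translation-invariant augmented β-arboreal gas Gibbs measure on Z^d. Then for every translation-invariant Borel event X ⊆ A(Z^d) that is measurable with respect to the σ-algebra generated by the subgraph coordinate (S,Φ) ↦ S, there exists a tail event Y ∈ 𝒯 such that Q(X Δ Y) = 0. In other words, the σ-algebra of translation-invariant events depending only on the subgraph coordinate is contained in the Q-completion of the tail σ-algebra 𝒯. -/

import Mathlib

open MeasureTheory
open scoped ENNReal symmDiff

noncomputable section

namespace ArborealGas

variable {V : Type*} (G : SimpleGraph V)

/-- The (inner vertex) boundary of a subgraph `H` relative to the host subgraph `Γ` of `G`: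
the vertices of `H` incident to an edge of `Γ` not belonging to `H`. -/
def bdry (Γ H : G.Subgraph) : Set V :=
  {v | v ∈ H.verts ∧ ∃ u, Γ.Adj v u ∧ ¬ H.Adj v u}

/-- Restriction of a relation to pairs inside a set. -/
def restrictRel (B : Set V) (φ : V → V → Prop) : V → V → Prop :=
  fun a b => a ∈ B ∧ b ∈ B ∧ φ a b

/-- `u` and `v` are connected in the quotient graph `F/φ` (the graph obtained from
`F` by identifying vertices of `F` lying in a common class of `φ`). -/
def quotConn (F : G.Subgraph) (φ : V → V → Prop) : V → V → Prop :=
  Relation.ReflTransGen fun a b =>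
    F.Adj a b ∨ (a ∈ F.verts ∧ b ∈ F.verts ∧ φ a b)

/-- `F` extends the boundary condition `φ` (an equivalence relation on the boundary of `H`
in the host `Γ`): the quotient `F/φ` is acyclic, i.e. every edge of `F` is a bridge of `F/φ`. -/
def Extends (Γ H : G.Subgraph) (φ : V → V → Prop) (F : G.Subgraph) : Prop :=
  ∀ a b, F.Adj a b →
    ¬ quotConn G (F.deleteEdges {s(a, b)}) (restrictRel (bdry G Γ H) φ) a b

/-- `F` is a spanning forest of `H` extending the boundary condition `φ`:
an element of `𝓕(H,φ)` containing every vertex of `H`. -/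
def IsSpanningForestExtending (Γ H : G.Subgraph) (φ : V → V → Prop) (F : G.Subgraph) : Prop :=
  F ≤ H ∧ F.verts = H.verts ∧ Extends G Γ H φ F

/-- `F` is an `(H,φ)`-maximal spanning forest: no edge of `H` can be added to `F`
while remaining a spanning forest extending `φ`. -/
def IsMaximalSpanningForestExtending (Γ H : G.Subgraph) (φ : V → V → Prop)
    (F : G.Subgraph) : Prop :=
  IsSpanningForestExtending G Γ H φ F ∧
    ∀ a b, (hab : H.Adj a b) → ¬ F.Adj a b →
      ¬ IsSpanningForestExtending G Γ H φ (F ⊔ G.subgraphOfAdj (H.adj_sub hab))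

open Classical in
/-- The unnormalized arboreal gas weight `β ^ |F|` of a spanning forest `F` of `H`
extending `φ` (with the convention `0 ^ 0 = 1`); for `β = ∞` the uniform weight on
`(H,φ)`-maximal spanning forests. -/
def gibbsWeight (β : ℝ≥0∞) (Γ H : G.Subgraph) (φ : V → V → Prop) (F : G.Subgraph) : ℝ≥0∞ :=
  if β = ⊤ then (if IsMaximalSpanningForestExtending G Γ H φ F then 1 else 0)
  else if IsSpanningForestExtending G Γ H φ F then β ^ F.edgeSet.ncard else 0

/-- The σ-algebra on the space of subgraphs of `G`: the product (cylinder) σ-algebra,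
generated by the vertex- and edge-membership maps. -/
instance subgraphMeasurableSpace : MeasurableSpace G.Subgraph :=
  MeasurableSpace.comap
    (fun S => ((fun v => v ∈ S.verts), S.Adj) :
      G.Subgraph → (V → Prop) × (V → V → Prop)) inferInstance

/-- The finite-volume `β`-arboreal gas Gibbs measure `P^φ_{H,β}` on the finite subgraph `H`
of the host graph `Γ` with boundary condition `φ`, regarded as a measure on subgraphs of `G`:
each spanning forest `F` of `H` extending `φ` gets probability proportional to `β ^ |F|`
(uniform on `(H,φ)`-maximal spanning forests when `β = ∞`). -/
def finGibbs (β : ℝ≥0∞) (Γ H : G.Subgraph) (φ : V → V → Prop) : Measure G.Subgraph :=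
  (∑' F : G.Subgraph, gibbsWeight G β Γ H φ F)⁻¹ •
    Measure.sum fun F : G.Subgraph => gibbsWeight G β Γ H φ F • Measure.dirac F

/-- The raw space in which augmented subgraphs of `G` live: pairs `(S, Φ)` of a subgraph `S`
of `G` and a boundary map `Φ` assigning to each (finite) subgraph `H` a relation on `V`.
It carries the product Borel σ-algebra. -/
abbrev AugSub := G.Subgraph × (G.Subgraph → V → V → Prop)

/-- `φ` is an equivalence relation on the set `B` (relating only elements of `B`). -/
def IsEquivRelOn (B : Set V) (φ : V → V → Prop) : Prop :=
  (∀ u v, φ u v → u ∈ B ∧ v ∈ B) ∧ (∀ u ∈ B, φ u u) ∧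
    (∀ u v, φ u v → φ v u) ∧ (∀ u v w, φ u v → φ v w → φ u w)

/-- `(S, Φ)` is an augmented subgraph of the host graph `Γ ≤ G`: `S ≤ Γ`, for each finite
subgraph `H` of `Γ` the relation `Φ(H)` is an equivalence relation on the boundary `∂H`,
and the consistency condition holds: for finite subgraphs `H ⊆ K` of `Γ` and `u, v ∈ ∂H`,
`u` and `v` are `Φ(H)`-related iff they are connected in `((S ⊓ K) ∖ E[H])/Φ(K)`. -/
def IsAugmentedIn (Γ : G.Subgraph) (A : AugSub G) : Prop :=
  A.1 ≤ Γ ∧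
  (∀ H : G.Subgraph, H ≤ Γ → H.verts.Finite → IsEquivRelOn (bdry G Γ H) (A.2 H)) ∧
  (∀ H K : G.Subgraph, H ≤ K → K ≤ Γ → K.verts.Finite →
    ∀ u v, u ∈ bdry G Γ H → v ∈ bdry G Γ H →
      (A.2 H u v ↔
        quotConn G ((A.1 ⊓ K).deleteEdges H.edgeSet)
          (restrictRel (bdry G Γ K) (A.2 K)) u v))

/-- The data of an augmented subgraph `(S, Φ)` determined outside the finite subgraph `H`:
the subgraph `S ∖ E[H]` together with the family `Φ_H = (Φ(K) : K ⊇ H finite)`. -/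
def outsideMap (Γ H : G.Subgraph) (A : AugSub G) :
    G.Subgraph × (G.Subgraph → V → V → Prop) :=
  (A.1.deleteEdges H.edgeSet,
    fun K u v => (H ≤ K ∧ K ≤ Γ ∧ K.verts.Finite) ∧ A.2 K u v)

/-- The σ-algebra `𝒢_H` on augmented subgraphs generated by `(S, Φ) ↦ (S ∖ E[H], Φ_H)`. -/
def outSigma (Γ H : G.Subgraph) : MeasurableSpace (AugSub G) :=
  MeasurableSpace.comap (outsideMap G Γ H) inferInstance

/-- A tail event: an event belonging to `𝒢_H` for every finite subgraph `H`. -/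
def IsTailEvent (Γ : G.Subgraph) (X : Set (AugSub G)) : Prop :=
  ∀ H : G.Subgraph, H ≤ Γ → H.verts.Finite → MeasurableSet[outSigma G Γ H] X

/-- `Q` is an augmented `β`-arboreal gas Gibbs measure on the host graph `Γ ≤ G`:
a probability measure on augmented subgraphs of `Γ` such that for every finite subgraph `H`
of `Γ` and every subgraph `F₀` of `H`, the conditional probability of `{A ∩ H = F₀}` given
`𝒢_H` is almost surely `P^{Φ(H)}_{H,β}(F₀)`. -/
def IsAugGibbs (β : ℝ≥0∞) (Γ : G.Subgraph) (Q : Measure (AugSub G)) : Prop :=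
  IsProbabilityMeasure Q ∧
  Q {A : AugSub G | IsAugmentedIn G Γ A} = 1 ∧
  ∀ H : G.Subgraph, H ≤ Γ → H.verts.Finite →
    ∀ F₀ : G.Subgraph, F₀ ≤ H →
      (Q[({A : AugSub G | A.1 ⊓ H = F₀}).indicator (fun _ => (1 : ℝ)) | outSigma G Γ H])
        =ᵐ[Q] fun A => (finGibbs G β Γ H (A.2 H) {F₀}).toReal

/-- `P` is a `β`-arboreal gas Gibbs measure on the host graph `Γ ≤ G`: the pushforward of
some augmented `β`-arboreal gas Gibbs measure (a Gibbs augmentation of `P`) under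
`(S, Φ) ↦ S`. -/
def IsGibbs (β : ℝ≥0∞) (Γ : G.Subgraph) (P : Measure G.Subgraph) : Prop :=
  ∃ Q : Measure (AugSub G), IsAugGibbs G β Γ Q ∧ Q.map Prod.fst = P

/-- The finite subgraph with vertex set `{u, v}` and no edges. -/
def pairSub (u v : V) : G.Subgraph where
  verts := {u, v}
  Adj _ _ := False
  adj_sub h := h.elim
  edge_vert h := h.elim
  symm := ⟨fun _ _ h => h.elim⟩

/-- The augmented connectivity relation of an augmented subgraph `(S, Φ)`:
`u ↔ v` iff `Φ({u,v})(u,v) = 1`. -/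
def augConn (A : AugSub G) (u v : V) : Prop :=
  A.2 (pairSub G u v) u v

/-- The subgraph of `G` induced by a set `I` of vertices. -/
def traceSub (I : Set V) : G.Subgraph where
  verts := I
  Adj u v := G.Adj u v ∧ u ∈ I ∧ v ∈ I
  adj_sub h := h.1
  edge_vert h := h.2.1
  symm := ⟨fun _ _ h => ⟨G.adj_symm h.1, h.2.2, h.2.1⟩⟩

/-- A subgraph is connected: nonempty vertex set, any two vertices joined by a path. -/
def SubConnected (S : G.Subgraph) : Prop :=
  S.verts.Nonempty ∧ ∀ u ∈ S.verts, ∀ v ∈ S.verts, Relation.ReflTransGen S.Adj u v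

/-- The hypercubic lattice `ℤ^d`: vertices `Fin d → ℤ`, edges between points at
`ℓ¹`-distance one. -/
def ZdGraph (d : ℕ) : SimpleGraph (Fin d → ℤ) where
  Adj x y := ∑ i, (x i - y i).natAbs = 1
  symm := ⟨by
    intro x y h
    rw [← h]
    exact Finset.sum_congr rfl fun i _ => by omega⟩
  loopless := ⟨by intro x h; simp at h⟩

/-- Translation of subgraphs of `ℤ^d` by a lattice vector `t`. -/
def translateSub {d : ℕ} (t : Fin d → ℤ) (S : (ZdGraph d).Subgraph) : (ZdGraph d).Subgraph where
  verts := {v | v - t ∈ S.verts}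
  Adj u v := S.Adj (u - t) (v - t)
  adj_sub := by
    intro u v h
    have h2 := S.adj_sub h
    simpa [ZdGraph, sub_sub_sub_cancel_right] using h2
  edge_vert := by intro u v h; exact S.edge_vert h
  symm := ⟨fun _ _ h => S.adj_symm h⟩

/-- Translation of augmented subgraphs of `ℤ^d` by a lattice vector `t`:
`(τ_t Φ)(H)(u,v) = Φ(H - t)(u - t, v - t)`. -/
def translateAug {d : ℕ} (t : Fin d → ℤ) (A : AugSub (ZdGraph d)) : AugSub (ZdGraph d) :=
  (translateSub t A.1, fun K u v => A.2 (translateSub (-t) K) (u - t) (v - t))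

/-- A translation-invariant augmented `β`-arboreal gas Gibbs measure on `ℤ^d`. -/
def IsTransInvAugGibbs (d : ℕ) (β : ℝ≥0∞) (Q : Measure (AugSub (ZdGraph d))) : Prop :=
  IsAugGibbs (ZdGraph d) β ⊤ Q ∧ ∀ t, Q.map (translateAug t) = Q

/-- An extremal point of the convex set of translation-invariant augmented `β`-arboreal gas
Gibbs measures on `ℤ^d`. -/
def IsExtremalTransInvAugGibbs (d : ℕ) (β : ℝ≥0∞)
    (Q : Measure (AugSub (ZdGraph d))) : Prop :=
  IsTransInvAugGibbs d β Q ∧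
    ∀ (Q₁ Q₂ : Measure (AugSub (ZdGraph d))) (t : ℝ≥0∞), 0 < t → t < 1 →
      IsTransInvAugGibbs d β Q₁ → IsTransInvAugGibbs d β Q₂ →
      Q = t • Q₁ + (1 - t) • Q₂ → Q₁ = Q₂

end ArborealGas

/-!
An invariant event `X` of the subgraph coordinate is approximated by an event depending on
finitely many vertices and edges. Translating that event off a given finite subgraph `H` keeps the
quality of the approximation (invariance of `Q` and of `X`) and makes it measurable with respect
to `𝒢_H`, since it no longer looks at the edges of `H`. Along an exhaustion of `ℤ^d` by finite
subgraphs, the `limsup` of such approximations with summable errors is a tail event, and by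
Borel–Cantelli it differs from `X` by a null set.
-/

namespace MeasureTheory

open Filter

theorem symmDiff_limsup_subset_limsup_symmDiff {α : Type*} (X : Set α) (D : ℕ → Set α) :
    X ∆ limsup D atTop ⊆ limsup (fun n => X ∆ D n) atTop := by
  intro a ha
  simp only [Set.mem_symmDiff, mem_limsup_iff_frequently_mem, not_frequently] at ha ⊢
  rcases ha with ⟨haX, haD⟩ | ⟨haD, haX⟩
  · exact (haD.mono fun n h => Or.inl ⟨haX, h⟩).frequently
  · exact haD.mono fun n h => Or.inr ⟨h, haX⟩

theorem exists_symmDiff_null_forall_measurableSet_of_approx {α : Type*} [MeasurableSpace α]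
    (μ : Measure α) {𝒢 : ℕ → MeasurableSpace α} (h𝒢 : Antitone 𝒢) {X : Set α}
    (hX : ∀ n, ∀ ε : ℝ≥0∞, 0 < ε → ∃ D, MeasurableSet[𝒢 n] D ∧ μ (X ∆ D) < ε) :
    ∃ Y, (∀ n, MeasurableSet[𝒢 n] Y) ∧ μ (X ∆ Y) = 0 := by
  obtain ⟨δ, hδpos, hδsum⟩ := ENNReal.exists_pos_sum_of_countable one_ne_zero ℕ
  choose D hDmeas hDδ using fun n => hX n (δ n) (ENNReal.coe_pos.mpr (hδpos n))
  refine ⟨limsup D atTop, fun N => ?_, ?_⟩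
  · rw [← limsup_nat_add D N]
    exact @MeasurableSet.measurableSet_limsup _ (𝒢 N) _
      fun n => h𝒢 (Nat.le_add_left N n) _ (hDmeas (n + N))
  · refine measure_mono_null (symmDiff_limsup_subset_limsup_symmDiff X D)
      (measure_limsup_atTop_eq_zero ?_)
    exact ne_top_of_le_ne_top ENNReal.one_ne_top
      ((ENNReal.tsum_le_tsum fun n => (hDδ n).le).trans hδsum.le)

theorem exists_mem_symmDiff_lt_of_le_generateFrom {α : Type*} {m : MeasurableSpace α}
    (μ : Measure α) [IsFiniteMeasure μ] {m₀ : MeasurableSpace α} (hm₀ : m₀ ≤ m)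
    {𝒜 : Set (Set α)} (h𝒜 : IsSetAlgebra 𝒜) (hgen : m₀ = MeasurableSpace.generateFrom 𝒜)
    {s : Set α} (hs : MeasurableSet[m₀] s) {ε : ℝ≥0∞} (hε : 0 < ε) :
    ∃ t ∈ 𝒜, μ (s ∆ t) < ε := by
  obtain ⟨r, -, hr0, hrε⟩ := ENNReal.lt_iff_exists_real_btwn.mp hε
  have hdense := @Measure.MeasureDense.of_generateFrom_isSetAlgebra_finite _ m₀
    (μ.trim hm₀) 𝒜 (isFiniteMeasure_trim hm₀) h𝒜 hgen
  obtain ⟨t, ht𝒜, hst⟩ :=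
    hdense.approx s hs (measure_ne_top _ _) r (ENNReal.ofReal_pos.mp hr0)
  refine ⟨t, ht𝒜, ?_⟩
  rw [trim_measurableSet_eq hm₀ (hs.symmDiff (hdense.measurable t ht𝒜))] at hst
  exact hst.trans hrε

end MeasureTheory

theorem exists_disjoint_image_sub_of_finite {V : Type*} [AddCommGroup V] [Infinite V]
    {J K : Set V} (hJ : J.Finite) (hK : K.Finite) :
    ∃ t, Disjoint ((fun v => v - t) '' J) K := by
  obtain ⟨t, ht⟩ := (hJ.sub hK).exists_notMem
  refine ⟨t, Set.disjoint_left.mpr ?_⟩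
  rintro _ ⟨v, hv, rfl⟩ hvt
  exact ht (by simpa only [sub_sub_cancel] using Set.sub_mem_sub hv hvt)

namespace ArborealGas

open SimpleGraph

section General

variable {V : Type*} (G : SimpleGraph V)

lemma measurable_mem_verts (v : V) : Measurable fun S : G.Subgraph => v ∈ S.verts :=
  (measurable_pi_apply v).comp (measurable_fst.comp (comap_measurable _))

lemma measurable_adj (u v : V) : Measurable fun S : G.Subgraph => S.Adj u v :=
  (measurable_pi_apply v).comp
    ((measurable_pi_apply u).comp (measurable_snd.comp (comap_measurable _)))

variable {G} in
lemma measurable_to_subgraph {α : Type*} [MeasurableSpace α] {f : α → G.Subgraph}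
    (hverts : ∀ v, Measurable fun a => v ∈ (f a).verts)
    (hadj : ∀ u v, Measurable fun a => (f a).Adj u v) : Measurable f := by
  rintro _ ⟨s, hs, rfl⟩
  exact (Measurable.prod (measurable_pi_iff.mpr hverts)
    (measurable_pi_iff.mpr fun u => measurable_pi_iff.mpr (hadj u))) hs

lemma measurable_boundary_apply (K : G.Subgraph) (u v : V) :
    Measurable fun A : AugSub G => A.2 K u v :=
  (measurable_pi_apply v).comp ((measurable_pi_apply u).comp
    ((measurable_pi_apply K).comp measurable_snd))

lemma measurable_outsideMap (Γ H : G.Subgraph) : Measurable (outsideMap G Γ H) := by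
  refine Measurable.prod (measurable_to_subgraph (fun v => ?_) fun u v => ?_) ?_
  · exact (measurable_mem_verts G v).comp (f := fun A : AugSub G => A.1) measurable_fst
  · exact ((measurable_adj G u v).comp (f := fun A : AugSub G => A.1) measurable_fst).and
      measurable_const
  · exact measurable_pi_iff.mpr fun K => measurable_pi_iff.mpr fun u =>
      measurable_pi_iff.mpr fun v => measurable_const.and (measurable_boundary_apply G K u v)

lemma outsideMap_comp_outsideMap {Γ H H' : G.Subgraph} (h : H ≤ H') :
    outsideMap G Γ H' ∘ outsideMap G Γ H = outsideMap G Γ H' := by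
  funext A
  refine Prod.ext ?_ (funext fun K => funext fun u => funext fun v => propext ?_)
  · change (A.1.deleteEdges H.edgeSet).deleteEdges H'.edgeSet = A.1.deleteEdges H'.edgeSet
    rw [Subgraph.deleteEdges_deleteEdges,
      Set.union_eq_self_of_subset_left (Subgraph.edgeSet_mono h)]
  · exact ⟨fun hK => ⟨hK.1, hK.2.2⟩, fun hK => ⟨hK.1, ⟨h.trans hK.1.1, hK.1.2⟩, hK.2⟩⟩

lemma outSigma_antitone (Γ : G.Subgraph) : Antitone (outSigma G Γ) := by
  intro H H' h
  unfold outSigma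
  rw [← outsideMap_comp_outsideMap G h, ← MeasurableSpace.comap_comp]
  exact MeasurableSpace.comap_mono (measurable_outsideMap G Γ H').comap_le

def cylinderSigma (J : Set V) : MeasurableSpace (AugSub G) :=
  MeasurableSpace.generateFrom {s | (∃ v ∈ J, s = {A : AugSub G | v ∈ A.1.verts}) ∨
    ∃ u ∈ J, ∃ v ∈ J, s = {A : AugSub G | A.1.Adj u v}}

lemma cylinderSigma_mono {J J' : Set V} (h : J ⊆ J') :
    cylinderSigma G J ≤ cylinderSigma G J' := by
  apply MeasurableSpace.generateFrom_mono
  rintro s (⟨v, hv, rfl⟩ | ⟨u, hu, v, hv, rfl⟩)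
  · exact Or.inl ⟨v, h hv, rfl⟩
  · exact Or.inr ⟨u, h hu, v, h hv, rfl⟩

lemma cylinderSigma_le_comap_fst (J : Set V) :
    cylinderSigma G J ≤ MeasurableSpace.comap Prod.fst (subgraphMeasurableSpace G) := by
  apply MeasurableSpace.generateFrom_le
  rintro s (⟨v, -, rfl⟩ | ⟨u, -, v, -, rfl⟩)
  · exact ⟨_, measurableSet_setOfPred.mpr (measurable_mem_verts G v), rfl⟩
  · exact ⟨_, measurableSet_setOfPred.mpr (measurable_adj G u v), rfl⟩

/-- Removing the edges of `H` does not touch vertices, nor edges with an endpoint off `H`. -/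
lemma cylinderSigma_le_outSigma {Γ H : G.Subgraph} {J : Set V} (hJ : Disjoint J H.verts) :
    cylinderSigma G J ≤ outSigma G Γ H := by
  apply MeasurableSpace.generateFrom_le
  rintro s (⟨v, -, rfl⟩ | ⟨u, hu, v, -, rfl⟩)
  · exact ⟨{A | v ∈ A.1.verts},
      measurableSet_setOfPred.mpr ((measurable_mem_verts G v).comp measurable_fst), rfl⟩
  · refine ⟨{A | A.1.Adj u v},
      measurableSet_setOfPred.mpr ((measurable_adj G u v).comp measurable_fst), ?_⟩
    ext A
    simp only [outsideMap, Set.mem_preimage, Set.mem_ofPred_eq, Subgraph.deleteEdges_adj,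
      Subgraph.mem_edgeSet, and_iff_left_iff_imp]
    exact fun _ huv => Set.disjoint_left.mp hJ hu (H.edge_vert huv)

def cylinderAlgebra : Set (Set (AugSub G)) :=
  {s | ∃ J : Finset V, MeasurableSet[cylinderSigma G J] s}

lemma isSetAlgebra_cylinderAlgebra [DecidableEq V] : IsSetAlgebra (cylinderAlgebra G) where
  empty_mem := ⟨∅, @MeasurableSet.empty _ (cylinderSigma G _)⟩
  compl_mem := fun _ ⟨J, hJ⟩ => ⟨J, hJ.compl⟩
  union_mem := fun _ _ ⟨J, hJ⟩ ⟨J', hJ'⟩ =>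
    ⟨J ∪ J', MeasurableSet.union (m := cylinderSigma G _)
      (cylinderSigma_mono G (by simp) _ hJ) (cylinderSigma_mono G (by simp) _ hJ')⟩

lemma comap_fst_eq_generateFrom_cylinderAlgebra [DecidableEq V] :
    MeasurableSpace.comap Prod.fst (subgraphMeasurableSpace G) =
      MeasurableSpace.generateFrom (cylinderAlgebra G) := by
  refine le_antisymm ?_ (MeasurableSpace.generateFrom_le fun s ⟨J, hJ⟩ =>
    cylinderSigma_le_comap_fst G J s hJ)
  let : MeasurableSpace (AugSub G) := MeasurableSpace.generateFrom (cylinderAlgebra G)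
  have hcyl : ∀ J : Finset V, cylinderSigma G J ≤ ‹MeasurableSpace (AugSub G)› :=
    fun J s hs => MeasurableSpace.measurableSet_generateFrom ⟨J, hs⟩
  refine Measurable.comap_le (measurable_to_subgraph (fun v => ?_) fun u v => ?_)
  · exact measurableSet_setOfPred.mp (hcyl {v} _ (MeasurableSpace.measurableSet_generateFrom
      (Or.inl ⟨v, by simp, rfl⟩)))
  · exact measurableSet_setOfPred.mp (hcyl {u, v} _ (MeasurableSpace.measurableSet_generateFrom
      (Or.inr ⟨u, by simp, v, by simp, rfl⟩)))

theorem exists_finite_exhaustion [Countable V] (Γ : G.Subgraph) :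
    ∃ K : ℕ → G.Subgraph, Monotone K ∧ (∀ n, K n ≤ Γ ∧ (K n).verts.Finite) ∧
      ∀ H ≤ Γ, H.verts.Finite → ∃ n, H ≤ K n := by
  obtain ⟨f, hf⟩ := Countable.exists_injective_nat V
  refine ⟨fun n => Γ.induce (Γ.verts ∩ f ⁻¹' Set.Iio n), fun m n hmn =>
    Subgraph.induce_mono_right (Set.inter_subset_inter_right _
      (Set.preimage_mono (Set.Iio_subset_Iio hmn))), fun n => ⟨?_, ?_⟩, fun H hH hfin => ?_⟩
  · exact ⟨Set.inter_subset_left, fun _ _ h => h.2.2⟩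
  · exact ((Set.finite_Iio n).preimage hf.injOn).subset Set.inter_subset_right
  · obtain ⟨N, hN⟩ := (hfin.image f).bddAbove
    refine ⟨N + 1, ?_⟩
    calc H = H.induce H.verts := Subgraph.induce_self_verts.symm
      _ ≤ Γ.induce (Γ.verts ∩ f ⁻¹' Set.Iio (N + 1)) := Subgraph.induce_mono hH fun v hv =>
        ⟨hH.1 hv, Nat.lt_succ_of_le (hN ⟨v, hv, rfl⟩)⟩

theorem exists_isTailEvent_symmDiff_null [Countable V] (Γ : G.Subgraph)
    (Q : Measure (AugSub G)) {X : Set (AugSub G)}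
    (hX : ∀ H ≤ Γ, H.verts.Finite → ∀ ε : ℝ≥0∞, 0 < ε →
      ∃ D, MeasurableSet[outSigma G Γ H] D ∧ Q (X ∆ D) < ε) :
    ∃ Y, IsTailEvent G Γ Y ∧ Q (X ∆ Y) = 0 := by
  obtain ⟨K, hKmono, hK, hKexh⟩ := exists_finite_exhaustion G Γ
  obtain ⟨Y, hY, hXY⟩ := exists_symmDiff_null_forall_measurableSet_of_approx Q
    ((outSigma_antitone G Γ).comp_monotone hKmono) fun n => hX (K n) (hK n).1 (hK n).2
  refine ⟨Y, fun H hH hfin => ?_, hXY⟩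
  obtain ⟨n, hn⟩ := hKexh H hH hfin
  exact outSigma_antitone G Γ hn _ (hY n)

end General

section Translations

variable {d : ℕ}

lemma measurable_translateAug (t : Fin d → ℤ) : Measurable (translateAug t) := by
  refine Measurable.prod (measurable_to_subgraph (fun v => ?_) fun u v => ?_) ?_
  · exact (measurable_mem_verts _ (v - t)).comp measurable_fst
  · exact (measurable_adj _ (u - t) (v - t)).comp measurable_fst
  · exact measurable_pi_iff.mpr fun K => measurable_pi_iff.mpr fun u =>
      measurable_pi_iff.mpr fun v =>
        measurable_boundary_apply _ (translateSub (-t) K) (u - t) (v - t)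

lemma measurableSet_preimage_translateAug (t : Fin d → ℤ) {J : Set (Fin d → ℤ)}
    {s : Set (AugSub (ZdGraph d))} (hs : MeasurableSet[cylinderSigma _ J] s) :
    MeasurableSet[cylinderSigma _ ((fun v => v - t) '' J)] (translateAug t ⁻¹' s) := by
  refine @measurable_generateFrom _ _ (cylinderSigma _ _) _ _ ?_ s hs
  rintro s (⟨v, hv, rfl⟩ | ⟨u, hu, v, hv, rfl⟩)
  · exact MeasurableSpace.measurableSet_generateFrom (Or.inl ⟨v - t, ⟨v, hv, rfl⟩, rfl⟩)
  · exact MeasurableSpace.measurableSet_generateFrom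
      (Or.inr ⟨u - t, ⟨u, hu, rfl⟩, v - t, ⟨v, hv, rfl⟩, rfl⟩)

theorem exists_outSigma_symmDiff_lt (hd : 1 ≤ d) {Q : Measure (AugSub (ZdGraph d))}
    [IsFiniteMeasure Q] (hQ : ∀ t, Q.map (translateAug t) = Q) {X : Set (AugSub (ZdGraph d))}
    (hXmeas : MeasurableSet[MeasurableSpace.comap Prod.fst
      (subgraphMeasurableSpace (ZdGraph d))] X)
    (hXinv : ∀ t : Fin d → ℤ, translateAug t ⁻¹' X = X) (Γ : (ZdGraph d).Subgraph)
    {H : (ZdGraph d).Subgraph} (hH : H.verts.Finite) {ε : ℝ≥0∞} (hε : 0 < ε) :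
    ∃ D, MeasurableSet[outSigma (ZdGraph d) Γ H] D ∧ Q (X ∆ D) < ε := by
  classical
  have : Nonempty (Fin d) := ⟨⟨0, hd⟩⟩
  have hfst : MeasurableSpace.comap Prod.fst (subgraphMeasurableSpace (ZdGraph d)) ≤
      (inferInstance : MeasurableSpace (AugSub (ZdGraph d))) :=
    measurable_fst.comap_le
  obtain ⟨C, ⟨J, hJ⟩, hXC⟩ := exists_mem_symmDiff_lt_of_le_generateFrom Q hfst
    (isSetAlgebra_cylinderAlgebra _) (comap_fst_eq_generateFrom_cylinderAlgebra _) hXmeas hε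
  obtain ⟨t, ht⟩ := exists_disjoint_image_sub_of_finite J.finite_toSet hH
  refine ⟨translateAug t ⁻¹' C,
    cylinderSigma_le_outSigma _ ht _ (measurableSet_preimage_translateAug t hJ), ?_⟩
  have hXCmeas : MeasurableSet (X ∆ C) :=
    hfst _ (hXmeas.symmDiff (cylinderSigma_le_comap_fst _ _ _ hJ))
  rwa [← hXinv t, ← Set.preimage_symmDiff,
    ← Measure.map_apply (measurable_translateAug t) hXCmeas, hQ t]

end Translations

theorem invariant_subgraph_events_in_tail_completion_general
    (d : ℕ) (hd : 1 ≤ d) (β : ℝ≥0∞)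
    (Q : Measure (AugSub (ZdGraph d))) (hQ : IsTransInvAugGibbs d β Q)
    (X : Set (AugSub (ZdGraph d)))
    (hXmeas : MeasurableSet[MeasurableSpace.comap Prod.fst
      (subgraphMeasurableSpace (ZdGraph d))] X)
    (hXinv : ∀ t : Fin d → ℤ, translateAug t ⁻¹' X = X) :
    ∃ Y : Set (AugSub (ZdGraph d)), IsTailEvent (ZdGraph d) ⊤ Y ∧ Q (X ∆ Y) = 0 := by
  obtain ⟨⟨hQprob, -, -⟩, hQinv⟩ := hQ
  exact exists_isTailEvent_symmDiff_null _ ⊤ Q fun H _ hH ε hε =>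
    exists_outSigma_symmDiff_lt hd hQinv hXmeas hXinv ⊤ hH hε

/-- Lemma: invariant subgraph events lie in the tail completion.
Fix `d ≥ 1` and `β ∈ (0,∞]`, and let `Q` be a translation-invariant augmented `β`-arboreal
gas Gibbs measure on `ℤ^d`. Then for every translation-invariant event `X` measurable with
respect to the σ-algebra generated by the subgraph coordinate, there is a tail event `Y`
with `Q(X Δ Y) = 0`. -/
theorem invariant_subgraph_events_in_tail_completion
    (d : ℕ) (hd : 1 ≤ d) (β : ℝ≥0∞) (hβ : 0 < β)
    (Q : Measure (AugSub (ZdGraph d))) (hQ : IsTransInvAugGibbs d β Q)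
    (X : Set (AugSub (ZdGraph d)))
    (hXmeas : MeasurableSet[MeasurableSpace.comap Prod.fst
      (subgraphMeasurableSpace (ZdGraph d))] X)
    (hXinv : ∀ t : Fin d → ℤ, translateAug t ⁻¹' X = X) :
    ∃ Y : Set (AugSub (ZdGraph d)), IsTailEvent (ZdGraph d) ⊤ Y ∧ Q (X ∆ Y) = 0 :=
  invariant_subgraph_events_in_tail_completion_general d hd β Q hQ X hXmeas hXinv

end ArborealGas

end
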